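/- arXiv:2405.10407 — 3 statements merged into one kernel-verified Lean document; each statement's English description precedes it below -/
import Mathlib

section
/- Let p : Fin 9 → ℝ³ be nine points. Then there exist scalars λ : Fin 9 → ℝ such that ∑ λ i • p i = 0, ∑ λ i = 0, and at least three of the λ i are nonzero. -/
/-
An affine dependency of points `p i` is a vector `l` in the kernel of `l ↦ ∑ l i • (1, p i)`; for
nine points of `ℝ³` this is a subspace of `ℝ⁹` of dimension at least `9 - 4 = 5`. A subspace `V`
of `K^ι` of dimension `d` cannot consist of vectors with fewer than `d` nonzero coordinates: such
vectors lie in the finitely many coordinate subspaces spanned by fewer than `d` basis vectors,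
each meeting `V` in a proper subspace, and over an infinite field no space is a finite union of
proper subspaces.
-/

open scoped Classical

open Finset Module LinearMap

lemma finrank_iInf_ker_proj_compl {K ι : Type*} [Field K] (s : Finset ι) :
    finrank K (⨅ i ∈ (↑s : Set ι)ᶜ, ker (proj i) : Submodule K (ι → K)) = #s := by
  rw [(iInfKerProjEquiv K (fun _ => K) disjoint_compl_right (by simp)).finrank_eq]
  simp

lemma Submodule.exists_mem_le_card_support {K ι : Type*} [Field K] [Infinite K]
    [Fintype ι] (V : Submodule K (ι → K)) {m : ℕ} (hm : m ≤ finrank K V) :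
    ∃ v ∈ V, m ≤ #{i | v i ≠ 0} := by
  by_contra! hsmall
  let W : {s : Finset ι // #s < m} → Submodule K V := fun s =>
    (⨅ i ∈ (↑s.1 : Set ι)ᶜ, ker (proj i) : Submodule K (ι → K)).comap V.subtype
  have hcover : ⋃ s, (W s : Set V) = Set.univ := by
    refine Set.eq_univ_of_forall fun v => Set.mem_iUnion.mpr ⟨⟨_, hsmall v v.2⟩, ?_⟩
    simp [W]
  obtain ⟨s, hs⟩ := Subspace.exists_eq_top_of_iUnion_eq_univ hcover
  have hVle : V ≤ (⨅ i ∈ (↑s.1 : Set ι)ᶜ, ker (proj i) : Submodule K (ι → K)) := by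
    intro v hv
    simpa [W] using (hs ▸ Submodule.mem_top : (⟨v, hv⟩ : V) ∈ W s)
  have := Submodule.finrank_mono hVle
  rw [finrank_iInf_ker_proj_compl] at this
  omega

lemma card_sub_finrank_succ_le_finrank_ker_linearCombination {K ι E : Type*} [Field K]
    [Fintype ι] [AddCommGroup E] [Module K E] [FiniteDimensional K E] (p : ι → E) :
    Fintype.card ι - (finrank K E + 1) ≤
      finrank K (ker (Fintype.linearCombination K fun i => ((1 : K), p i))) := by
  have h := finrank_range_add_finrank_ker (Fintype.linearCombination K fun i => ((1 : K), p i))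
  have hr := Submodule.finrank_le (range (Fintype.linearCombination K fun i => ((1 : K), p i)))
  rw [finrank_fintype_fun_eq_card] at h
  rw [finrank_prod, finrank_self] at hr
  omega

theorem stmt_10 (p : Fin 9 → EuclideanSpace ℝ (Fin 3)) :
    ∃ l : Fin 9 → ℝ,
      (∑ i, l i • p i = 0) ∧ (∑ i, l i = 0) ∧
      3 ≤ (Finset.univ.filter (fun i => l i ≠ 0)).card := by
  have hdim : 3 ≤ finrank ℝ (ker (Fintype.linearCombination ℝ fun i => ((1 : ℝ), p i))) := by
    have := card_sub_finrank_succ_le_finrank_ker_linearCombination (K := ℝ) p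
    rw [Fintype.card_fin, finrank_euclideanSpace_fin] at this
    omega
  obtain ⟨l, hl, hcard⟩ := Submodule.exists_mem_le_card_support _ hdim
  rw [mem_ker, Fintype.linearCombination_apply, Prod.ext_iff] at hl
  simp only [Prod.fst_sum, Prod.snd_sum, Prod.smul_mk, smul_eq_mul, mul_one, Prod.fst_zero,
    Prod.snd_zero] at hl
  exact ⟨l, hl.2, hl.1, hcard⟩
end

section
/- Let n ≥ 2 and let T : ℝⁿ → ℝ^m be a linear map with n ≥ m + 3. Then there exists a nonzero x in the kernel of T with at least three nonzero coordinates. -/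
/-!
The kernel of `T` has dimension at least `n - m ≥ 3`. If each kernel vector had at most two
nonzero coordinates, the kernel would be covered by the finitely many subspaces supported on
two coordinates. A vector space over an infinite field is not a finite union of proper
subspaces, so the kernel would lie in one of them, which has dimension at most `2`.
-/

open Module

variable {K ι : Type*} [DivisionRing K]

theorem Submodule.finrank_le_card_of_forall_notMem_eq_zero {V : Submodule K (ι → K)}
    {s : Finset ι} (hV : ∀ x ∈ V, ∀ i ∉ s, x i = 0) : finrank K V ≤ s.card := by
  have hinj : Function.Injective ((LinearMap.funLeft K K ((↑) : s → ι)).comp V.subtype) := by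
    rw [← LinearMap.ker_eq_bot, LinearMap.ker_eq_bot']
    intro x hx
    ext i
    by_cases hi : i ∈ s
    · exact congr_fun hx ⟨i, hi⟩
    · exact hV x x.2 i hi
  simpa using LinearMap.finrank_le_finrank_of_injective hinj

theorem Submodule.exists_forall_notMem_eq_zero_of_card_support_le [Fintype ι] [DecidableEq K]
    [Infinite K] {V : Submodule K (ι → K)} {k : ℕ}
    (hV : ∀ x ∈ V, (Finset.univ.filter (fun i => x i ≠ 0)).card ≤ k) :
    ∃ s : Finset ι, s.card ≤ k ∧ ∀ x ∈ V, ∀ i ∉ s, x i = 0 := by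
  let p : {s : Finset ι // s.card ≤ k} → Subspace K V := fun s =>
    (Submodule.pi (↑s.1)ᶜ fun _ => ⊥).comap V.subtype
  have hcover : ⋃ s, (p s : Set V) = Set.univ := by
    refine Set.eq_univ_of_forall fun x => Set.mem_iUnion.mpr ⟨⟨_, hV x x.2⟩, ?_⟩
    intro i hi
    simpa using hi
  obtain ⟨s, hs⟩ := Subspace.exists_eq_top_of_iUnion_eq_univ hcover
  refine ⟨s.1, s.2, fun x hx i hi => ?_⟩
  have hx : (⟨x, hx⟩ : V) ∈ p s := hs ▸ Submodule.mem_top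
  simpa using hx i hi

theorem Submodule.exists_mem_lt_card_support_of_lt_finrank [Fintype ι] [DecidableEq K]
    [Infinite K] {V : Submodule K (ι → K)} {k : ℕ} (hk : k < finrank K V) :
    ∃ x ∈ V, k < (Finset.univ.filter (fun i => x i ≠ 0)).card := by
  by_contra! hV
  obtain ⟨s, hsk, hs⟩ := exists_forall_notMem_eq_zero_of_card_support_le hV
  have := finrank_le_card_of_forall_notMem_eq_zero hs
  omega

open scoped Classical

theorem stmt_11_general {n m : ℕ} (h : n ≥ m + 3)
    (T : (Fin n → ℝ) →ₗ[ℝ] (Fin m → ℝ)) :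
    ∃ x : Fin n → ℝ, x ≠ 0 ∧ T x = 0 ∧
      3 ≤ (Finset.univ.filter (fun i => x i ≠ 0)).card := by
  have hker : 2 < finrank ℝ (LinearMap.ker T) := by
    have hrank := LinearMap.finrank_range_add_finrank_ker T
    have hrange := Submodule.finrank_le (LinearMap.range T)
    simp only [finrank_fin_fun] at hrank hrange
    omega
  obtain ⟨x, hxT, hx⟩ := Submodule.exists_mem_lt_card_support_of_lt_finrank hker
  refine ⟨x, ?_, hxT, hx⟩
  rintro rfl
  simp at hx

theorem stmt_11 {n m : ℕ} (hn : 2 ≤ n) (h : n ≥ m + 3)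
    (T : (Fin n → ℝ) →ₗ[ℝ] (Fin m → ℝ)) :
    ∃ x : Fin n → ℝ, x ≠ 0 ∧ T x = 0 ∧
      3 ≤ (Finset.univ.filter (fun i => x i ≠ 0)).card :=
  stmt_11_general h T
end

section
/- Let p : Fin 9 → ℝ³ and define F i j k = p i × p j + p j × p k + p k × p i for all i, j, k. Then the 9-particle 3-equilibrium problem for F has a nontrivial solution: there exist fully symmetric λ : Fin 9 → Fin 9 → Fin 9 → ℝ, not all zero on triples i < j < k, such that for all m < n, ∑_{i ∉ {m,n}} λ m n i • F m n i = 0. -/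
/-!
If `μ` is an affine dependence of the points, `∑ μ i = 0` and `∑ μ i • p i = 0`, then
`λ i j k = μ i * μ j * μ k` is a solution: by bilinearity
`∑ i, μ i • F m n i = (∑ μ i) • p m ⨯₃ p n + p n ⨯₃ (∑ μ i • p i) + (∑ μ i • p i) ⨯₃ p m = 0`,
and the terms `i = m`, `i = n` vanish anyway. The affine dependences of nine points of `ℝ³` form a
subspace of `ℝ⁹` of dimension at least `5`, and a `d`-dimensional subspace contains a vector with
at least `d` nonzero coordinates: otherwise it would be the finite union of its proper subspaces of
vectors supported on fewer than `d` coordinates, impossible over an infinite field. So `λ` can be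
chosen nonzero on some triple `i < j < k`.
-/

open Finset Module Matrix

theorem Finset.exists_lt_lt_of_two_lt_card {α : Type*} [LinearOrder α] {s : Finset α}
    (h : 2 < #s) : ∃ a ∈ s, ∃ b ∈ s, ∃ c ∈ s, a < b ∧ b < c := by
  let e := s.orderEmbOfFin rfl
  exact ⟨e ⟨0, by omega⟩, s.orderEmbOfFin_mem rfl _, e ⟨1, h.trans' one_lt_two⟩,
    s.orderEmbOfFin_mem rfl _, e ⟨2, h⟩, s.orderEmbOfFin_mem rfl _,
    e.strictMono (by simp [Fin.lt_def]), e.strictMono (by simp [Fin.lt_def])⟩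

section Support

variable {k ι : Type*} [Field k] [Fintype ι]

theorem Submodule.finrank_le_card_of_forall_eq_zero (W : Submodule k (ι → k)) (S : Finset ι)
    (hW : ∀ v ∈ W, ∀ i ∉ S, v i = 0) : finrank k W ≤ #S := by
  let restrict : W →ₗ[k] (S → k) := (LinearMap.funLeft k k Subtype.val).comp W.subtype
  have hinj : Function.Injective restrict := by
    rw [← LinearMap.ker_eq_bot, eq_bot_iff]
    rintro ⟨v, hv⟩ hzero
    ext i
    by_cases hi : i ∈ S
    · exact congrFun hzero ⟨i, hi⟩
    · exact hW v hv i hi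
  simpa using LinearMap.finrank_le_finrank_of_injective hinj

theorem Submodule.exists_finrank_le_card_support [Infinite k] [DecidableEq k]
    (W : Submodule k (ι → k)) : ∃ v ∈ W, finrank k W ≤ #{i | v i ≠ 0} := by
  by_contra! hsmall
  let vanishingOff (S : {S : Finset ι // #S < finrank k W}) : Subspace k W :=
    (Submodule.pi (↑S.1 : Set ι)ᶜ fun _ => ⊥).comap W.subtype
  have hcover : ⋃ S, (vanishingOff S : Set W) = Set.univ := by
    refine Set.eq_univ_of_forall fun v => Set.mem_iUnion.2 ⟨⟨_, hsmall v v.2⟩, ?_⟩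
    simp [vanishingOff]
  obtain ⟨S, hS⟩ := Subspace.exists_eq_top_of_iUnion_eq_univ hcover
  refine S.2.not_ge (W.finrank_le_card_of_forall_eq_zero S fun v hv i hi => ?_)
  have : (⟨v, hv⟩ : W) ∈ vanishingOff S := hS ▸ Submodule.mem_top
  simpa [vanishingOff, Submodule.mem_pi, hi] using this i

end Support

theorem exists_affineDependence_le_card_support {k ι E : Type*} [Field k] [Infinite k]
    [DecidableEq k] [Fintype ι] [AddCommGroup E] [Module k E] [FiniteDimensional k E]
    (p : ι → E) {d : ℕ} (hd : finrank k E + 1 + d ≤ Fintype.card ι) :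
    ∃ μ : ι → k, ∑ i, μ i = 0 ∧ ∑ i, μ i • p i = 0 ∧ d ≤ #{i | μ i ≠ 0} := by
  let T := Fintype.linearCombination k fun i => ((1 : k), p i)
  have hrank : d ≤ finrank k (LinearMap.ker T) := by
    have hrange := (LinearMap.range T).finrank_le
    have := LinearMap.finrank_range_add_finrank_ker T
    simp only [finrank_prod, finrank_self, finrank_fintype_fun_eq_card] at hrange this
    omega
  obtain ⟨μ, hμ, hsupp⟩ := (LinearMap.ker T).exists_finrank_le_card_support
  have hTμ : ∑ i, μ i • ((1 : k), p i) = 0 := hμ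
  refine ⟨μ, ?_, ?_, hrank.trans hsupp⟩
  · simpa [Prod.fst_sum] using congrArg Prod.fst hTμ
  · simpa [Prod.snd_sum] using congrArg Prod.snd hTμ

theorem sum_smul_cross_cyclic_eq_zero {R ι : Type*} [CommRing R] [Fintype ι]
    (p : ι → Fin 3 → R) {μ : ι → R} (hμ : ∑ i, μ i = 0) (hμp : ∑ i, μ i • p i = 0)
    (a b : Fin 3 → R) : ∑ i, μ i • (a ⨯₃ b + b ⨯₃ p i + p i ⨯₃ a) = 0 := by
  have hcross : ∑ i, μ i • (a ⨯₃ b + b ⨯₃ p i + p i ⨯₃ a) =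
      (∑ i, μ i) • a ⨯₃ b + b ⨯₃ (∑ i, μ i • p i) + (∑ i, μ i • p i) ⨯₃ a := by
    simp only [smul_add, sum_add_distrib, sum_smul, map_sum, LinearMap.map_smul,
      LinearMap.sum_apply, LinearMap.smul_apply]
  rw [hcross, hμ, hμp]
  simp

theorem stmt_15 (p : Fin 9 → (Fin 3 → ℝ))
    (F : Fin 9 → Fin 9 → Fin 9 → (Fin 3 → ℝ))
    (hF : ∀ i j kk, F i j kk =
      crossProduct (p i) (p j) + crossProduct (p j) (p kk) + crossProduct (p kk) (p i)) :
    ∃ l : Fin 9 → Fin 9 → Fin 9 → ℝ,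
      (∀ i j kk, l i j kk = l j kk i) ∧
      (∀ i j kk, l i j kk = l j i kk) ∧
      (∃ i j kk, i < j ∧ j < kk ∧ l i j kk ≠ 0) ∧
      (∀ m n : Fin 9, m < n →
        ∑ i ∈ Finset.univ.filter (fun i => i ≠ m ∧ i ≠ n), l m n i • F m n i = 0) := by
  obtain ⟨μ, hμ, hμp, hsupp⟩ :=
    exists_affineDependence_le_card_support (k := ℝ) p (d := 3) (by simp)
  obtain ⟨a, ha, b, hb, c, hc, hab, hbc⟩ := exists_lt_lt_of_two_lt_card hsupp
  refine ⟨fun i j k => μ i * μ j * μ k, fun _ _ _ => by ring, fun _ _ _ => by ring,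
    ⟨a, b, c, hab, hbc, by simp_all⟩, fun m n _ => ?_⟩
  have hdegenerate : ∀ i, (μ m * μ n * μ i) • F m n i ≠ 0 → i ≠ m ∧ i ≠ n := by
    intro i hi
    constructor <;> rintro rfl <;> simp [hF, cross_self, cross_anticomm'] at hi
  rw [sum_filter_of_ne fun i _ => hdegenerate i]
  simp only [hF, mul_smul, ← smul_sum, sum_smul_cross_cyclic_eq_zero p hμ hμp, smul_zero]
end
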